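/- arXiv:1601.07647 — 8 statements merged into one kernel-verified Lean document; each statement's English description precedes it below -/
import Mathlib

section
/- The transition matrix of the cubelike graph X(C) at time π/2 equals i^{|C|}·P_σ, where σ is the sum in (Z_2)^n of the elements of C. -/
open Matrix Complex

noncomputable def transP {n : ℕ} (x : Fin n → ZMod 2) :
    Matrix (Fin n → ZMod 2) (Fin n → ZMod 2) ℂ :=
  Matrix.of fun u v => if u = x + v then 1 else 0

noncomputable def cubeAdj {n : ℕ} (C : Finset (Fin n → ZMod 2)) :
    Matrix (Fin n → ZMod 2) (Fin n → ZMod 2) ℂ :=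
  Matrix.of fun u v => if u - v ∈ C then 1 else 0

/-! The translations `P_x` commute with each other and are involutions, so
`exp (i t A) = ∏ x ∈ C, exp (i t P_x)`, and for an involution `exp (z P) = cosh z + sinh z • P`,
which is `i • P` at `z = i π / 2`. Finally `∏ x ∈ C, P_x = P_σ` since `x ↦ P_x` is a homomorphism. -/

open NormedSpace

section Involution

variable {𝔸 : Type*} [Ring 𝔸] [Algebra ℂ 𝔸] [TopologicalSpace 𝔸] [IsTopologicalRing 𝔸]
  [ContinuousSMul ℂ 𝔸] [T2Space 𝔸]

theorem exp_smul_of_mul_self_eq_one (z : ℂ) {M : 𝔸} (hM : M * M = 1) :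
    exp (z • M) = cosh z • (1 : 𝔸) + sinh z • M := by
  have hsq : M ^ 2 = 1 := by rw [sq, hM]
  rw [exp_eq_tsum ℂ]
  refine HasSum.tsum_eq (HasSum.even_add_odd ?_ ?_)
  · convert (hasSum_cosh z).smul_const (1 : 𝔸) using 2 with k
    rw [smul_pow, pow_mul M, hsq, one_pow, smul_smul, div_eq_inv_mul]
  · convert (hasSum_sinh z).smul_const M using 2 with k
    rw [smul_pow, pow_succ M, pow_mul M, hsq, one_pow, one_mul, smul_smul, div_eq_inv_mul]

theorem exp_pi_div_two_mul_I_smul_of_mul_self_eq_one {M : 𝔸} (hM : M * M = 1) :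
    exp ((((Real.pi / 2 : ℝ) : ℂ) * I) • M) = I • M := by
  rw [exp_smul_of_mul_self_eq_one _ hM, cosh_mul_I, sinh_mul_I, ← ofReal_cos, ← ofReal_sin,
    Real.cos_pi_div_two, Real.sin_pi_div_two]
  simp

end Involution

section Translation

variable {n : ℕ}

theorem transP_zero : transP (0 : Fin n → ZMod 2) = 1 := by
  ext u v
  simp [transP, one_apply]

theorem transP_mul (x y : Fin n → ZMod 2) : transP x * transP y = transP (x + y) := by
  ext u v
  simp only [transP, mul_apply, of_apply]
  rw [Finset.sum_eq_single (y + v)]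
  · simp [add_assoc]
  · intro w _ hw
    simp [hw]
  · simp

theorem transP_commute (x y : Fin n → ZMod 2) : Commute (transP x) (transP y) := by
  rw [Commute, SemiconjBy, transP_mul, transP_mul, add_comm]

theorem transP_mul_self (x : Fin n → ZMod 2) : transP x * transP x = 1 := by
  rw [transP_mul, ZModModule.add_self, transP_zero]

theorem cubeAdj_eq_sum_transP (C : Finset (Fin n → ZMod 2)) :
    cubeAdj C = ∑ x ∈ C, transP x := by
  ext u v
  simp only [cubeAdj, transP, Matrix.sum_apply, of_apply, ← sub_eq_iff_eq_add]
  rw [Finset.sum_ite_eq]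

end Translation

theorem transition_matrix_at_pi_div_two (n : ℕ) (C : Finset (Fin n → ZMod 2)) :
    NormedSpace.exp ((((Real.pi / 2 : ℝ) : ℂ) * Complex.I) • cubeAdj C) =
      (Complex.I ^ C.card) • transP (∑ x ∈ C, x) := by
  rw [cubeAdj_eq_sum_transP]
  induction C using Finset.cons_induction with
  | empty => simp [transP_zero]
  | cons a C _ ih =>
    have hcomm : Commute ((((Real.pi / 2 : ℝ) : ℂ) * I) • transP a)
        ((((Real.pi / 2 : ℝ) : ℂ) * I) • ∑ x ∈ C, transP x) :=
      ((Commute.sum_right _ _ _ fun x _ => transP_commute a x).smul_right _).smul_left _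
    rw [Finset.sum_cons, smul_add, Matrix.exp_add_of_commute _ _ hcomm,
      exp_pi_div_two_mul_I_smul_of_mul_self_eq_one (transP_mul_self a), ih, smul_mul_smul_comm,
      transP_mul, Finset.sum_cons, Finset.card_cons, pow_succ']
end

section
/- Let C ⊆ (Z_2)^n and let σ be the sum of the elements of C. If σ ≠ 0, then perfect state transfer occurs in the cubelike graph X(C) from every vertex x to x + σ at time π/2; that is, the (x, x+σ) entry of H(π/2) has modulus 1. -/
/-!
Each translation matrix `P c` is an involution, since `c + c = 0` in `(ZMod 2)ⁿ`, so
`exp (i t P c) = cos t + i sin t P c`, which equals `i P c` at `t = π / 2`. The `P c` commute, hence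
`H(π/2) = ∏ c ∈ C, i P c = i ^ |C| P σ`, a unimodular multiple of the permutation matrix of
`x ↦ x + σ`.
-/

open Matrix Complex

namespace NormedSpace

variable {A : Type*} [Ring A] [Algebra ℂ A] [TopologicalSpace A] [IsTopologicalRing A]
  [ContinuousSMul ℂ A] [T2Space A] {u : A}

theorem exp_smul_of_mul_self_eq_one (hu : u * u = 1) (z : ℂ) :
    exp (z • u) = cosh z • (1 : A) + sinh z • u := by
  have hu_even (k : ℕ) : u ^ (2 * k) = 1 := by rw [pow_mul, sq, hu, one_pow]
  let term (m : ℕ) : A := (m.factorial⁻¹ : ℂ) • (z • u) ^ m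
  have even : HasSum (fun k => term (2 * k)) (cosh z • (1 : A)) := by
    convert (hasSum_cosh z).smul_const (1 : A) using 2 with k
    dsimp only [term]
    rw [smul_pow, hu_even, smul_smul, div_eq_inv_mul]
  have odd : HasSum (fun k => term (2 * k + 1)) (sinh z • u) := by
    convert (hasSum_sinh z).smul_const u using 2 with k
    dsimp only [term]
    rw [smul_pow, pow_succ u, hu_even, one_mul, smul_smul, div_eq_inv_mul]
  rw [exp_eq_tsum ℂ]
  exact (even.even_add_odd odd).tsum_eq

theorem exp_pi_div_two_mul_I_smul_of_mul_self_eq_one (hu : u * u = 1) :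
    exp ((((Real.pi / 2 : ℝ) : ℂ) * I) • u) = I • u := by
  rw [exp_smul_of_mul_self_eq_one hu, cosh_mul_I, sinh_mul_I, ← ofReal_cos, ← ofReal_sin,
    Real.cos_pi_div_two, Real.sin_pi_div_two]
  simp

end NormedSpace

section Translation

variable {G : Type*} [AddCommGroup G] [DecidableEq G] (R : Type*) [Semiring R]

def translationMatrix (c : G) : Matrix G G R :=
  of fun u v => if u - v = c then 1 else 0

variable {R}

theorem translationMatrix_eq_toMatrix (c : G) :
    translationMatrix R c = (Equiv.subRight c).toPEquiv.toMatrix := by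
  ext u v
  simp [translationMatrix, PEquiv.toMatrix_apply, eq_sub_iff_add_eq, eq_comm, add_comm]

theorem translationMatrix_zero : translationMatrix R (0 : G) = 1 := by
  ext u v
  simp [translationMatrix, one_apply, sub_eq_zero]

variable [Fintype G]

theorem translationMatrix_add (a b : G) :
    translationMatrix R (a + b) = translationMatrix R a * translationMatrix R b := by
  simp only [translationMatrix_eq_toMatrix, ← PEquiv.toMatrix_trans, ← Equiv.toPEquiv_trans]
  congr 2
  ext u
  simp [sub_sub]

theorem translationMatrix_mul_self {a : G} (ha : a + a = 0) :
    translationMatrix R a * translationMatrix R a = 1 := by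
  rw [← translationMatrix_add, ha, translationMatrix_zero]

theorem commute_translationMatrix (a b : G) :
    Commute (translationMatrix R a) (translationMatrix R b) := by
  rw [Commute, SemiconjBy, ← translationMatrix_add, ← translationMatrix_add, add_comm]

theorem exp_pi_div_two_mul_I_smul_sum_translationMatrix {s : Finset G}
    (hs : ∀ a ∈ s, a + a = 0) :
    NormedSpace.exp ((((Real.pi / 2 : ℝ) : ℂ) * I) • ∑ c ∈ s, translationMatrix ℂ c)
      = I ^ s.card • translationMatrix ℂ (∑ c ∈ s, c) := by
  induction s using Finset.induction with
  | empty => simp [translationMatrix_zero]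
  | insert a s ha ih =>
    have hcomm : Commute ((((Real.pi / 2 : ℝ) : ℂ) * I) • translationMatrix ℂ a)
        ((((Real.pi / 2 : ℝ) : ℂ) * I) • ∑ c ∈ s, translationMatrix ℂ c) :=
      ((Commute.sum_right _ _ _ fun c _ => commute_translationMatrix a c).smul_right _).smul_left _
    rw [Finset.sum_insert ha, smul_add, Matrix.exp_add_of_commute _ _ hcomm,
      NormedSpace.exp_pi_div_two_mul_I_smul_of_mul_self_eq_one
        (translationMatrix_mul_self (hs a (Finset.mem_insert_self a s))),
      ih fun c hc => hs c (Finset.mem_insert_of_mem hc), smul_mul_smul_comm,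
      ← translationMatrix_add, Finset.sum_insert ha, Finset.card_insert_of_notMem ha, pow_succ']

end Translation

theorem cubeAdj_eq_sum_translationMatrix {n : ℕ} (C : Finset (Fin n → ZMod 2)) :
    cubeAdj C = ∑ c ∈ C, translationMatrix ℂ c := by
  ext u v
  simp [cubeAdj, translationMatrix, Matrix.sum_apply]

theorem cubelike_pst_general (n : ℕ) (C : Finset (Fin n → ZMod 2))
    (σ : Fin n → ZMod 2) (hσ : σ = ∑ x ∈ C, x) (x : Fin n → ZMod 2) :
    ‖(NormedSpace.exp ((((Real.pi / 2 : ℝ) : ℂ) * Complex.I) • cubeAdj C) x (x + σ))‖ = 1 := by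
  have add_self (a : Fin n → ZMod 2) : a + a = 0 := funext fun i => CharTwo.add_self_eq_zero (a i)
  rw [cubeAdj_eq_sum_translationMatrix,
    exp_pi_div_two_mul_I_smul_sum_translationMatrix fun a _ => add_self a, ← hσ]
  have hx : x - (x + σ) = σ := by rw [sub_add_cancel_left, neg_eq_of_add_eq_zero_left (add_self σ)]
  simp [translationMatrix, hx]

theorem cubelike_pst (n : ℕ) (C : Finset (Fin n → ZMod 2))
    (σ : Fin n → ZMod 2) (hσ : σ = ∑ x ∈ C, x) (hσ0 : σ ≠ 0) (x : Fin n → ZMod 2) :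
    ‖(NormedSpace.exp ((((Real.pi / 2 : ℝ) : ℂ) * Complex.I) • cubeAdj C) x (x + σ))‖ = 1 :=
  cubelike_pst_general n C σ hσ x
end

section
/- Let G₁ and G₂ be graphs with adjacency matrices A₁ and A₂, and let H(t) = exp(i t A₁). If A₂ has spectral decomposition A₂ = Σ_{s=1}^{q} μ_s F_s (with the F_s orthogonal projections summing to I, F_r F_s = 0 for r ≠ s), then exp(i t (A₁ ⊗ A₂)) = Σ_{s=1}^{q} H(μ_s t) ⊗ F_s. -/
open Matrix Kronecker Complex

/-!
Since the `F s` are orthogonal idempotents summing to `1`, the map `M ↦ ∑ s, M s ⊗ₖ F s` is an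
algebra homomorphism from the product algebra `Fin q → Matrix m m ℂ` to `Matrix (m × p) (m × p) ℂ`.
It sends `(μ s • X)ₛ` to `X ⊗ₖ A₂`, and, being continuous, commutes with the exponential, which on
the product algebra is computed componentwise.
-/

namespace Matrix

theorem kronecker_finsetSum {ι l m n p R : Type*} [CommSemiring R] (A : Matrix l m R)
    (s : Finset ι) (B : ι → Matrix n p R) : A ⊗ₖ ∑ i ∈ s, B i = ∑ i ∈ s, A ⊗ₖ B i :=
  map_sum (kroneckerBilinear (R := R) A) B s

variable {ι m p R : Type*} [Fintype ι] [Fintype m] [DecidableEq m] [Fintype p] [DecidableEq p]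
  [CommSemiring R]

def kroneckerIdempotentsAlgHom {F : ι → Matrix p p R} (hF : CompleteOrthogonalIdempotents F) :
    (ι → Matrix m m R) →ₐ[R] Matrix (m × p) (m × p) R where
  toFun M := ∑ i, M i ⊗ₖ F i
  map_one' := by simp only [Pi.one_apply, ← kronecker_finsetSum, hF.complete, one_kronecker_one]
  map_mul' M N := by
    classical
    simp only [Finset.sum_mul_sum, ← mul_kronecker_mul, hF.mul_eq, apply_ite, kronecker_zero,
      Finset.sum_ite_eq, Finset.mem_univ, if_true, Pi.mul_apply]
  map_zero' := by simp only [Pi.zero_apply, zero_kronecker, Finset.sum_const_zero]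
  map_add' M N := by simp only [Pi.add_apply, add_kronecker, Finset.sum_add_distrib]
  commutes' r := by
    simp only [Pi.algebraMap_apply, Algebra.algebraMap_eq_smul_one, smul_kronecker,
      ← Finset.smul_sum, ← kronecker_finsetSum, hF.complete, one_kronecker_one]

theorem kroneckerIdempotentsAlgHom_apply {F : ι → Matrix p p R}
    (hF : CompleteOrthogonalIdempotents F) (M : ι → Matrix m m R) :
    kroneckerIdempotentsAlgHom hF M = ∑ i, M i ⊗ₖ F i :=
  rfl

open scoped Norms.Operator in
theorem exp_kronecker_sum_smul {𝕂 : Type*} [RCLike 𝕂] {F : ι → Matrix p p 𝕂}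
    (hF : CompleteOrthogonalIdempotents F) (A : Matrix m m 𝕂) (μ : ι → 𝕂) :
    NormedSpace.exp (A ⊗ₖ ∑ i, μ i • F i) = ∑ i, NormedSpace.exp (μ i • A) ⊗ₖ F i := by
  let Φ := kroneckerIdempotentsAlgHom (m := m) hF
  have hΦ : A ⊗ₖ ∑ i, μ i • F i = Φ fun i => μ i • A := by
    simp only [kroneckerIdempotentsAlgHom_apply, Φ, kronecker_finsetSum, kronecker_smul,
      smul_kronecker]
  have hexp_pi (i : ι) : NormedSpace.exp (fun i => μ i • A) i = NormedSpace.exp (μ i • A) :=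
    NormedSpace.map_exp (Pi.evalRingHom _ i) (continuous_apply i) _
  calc NormedSpace.exp (A ⊗ₖ ∑ i, μ i • F i)
      = Φ (NormedSpace.exp fun i => μ i • A) :=
        hΦ ▸ (NormedSpace.map_exp Φ Φ.toLinearMap.continuous_of_finiteDimensional _).symm
    _ = ∑ i, NormedSpace.exp (μ i • A) ⊗ₖ F i := by
        simp only [kroneckerIdempotentsAlgHom_apply, Φ, hexp_pi]

end Matrix

theorem exp_kronecker_spectral_general {m p : Type*} [Fintype m] [DecidableEq m]
    [Fintype p] [DecidableEq p] (q : ℕ)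
    (A₁ : Matrix m m ℂ) (A₂ : Matrix p p ℂ)
    (μ : Fin q → ℝ) (F : Fin q → Matrix p p ℂ)
    (hdec : A₂ = ∑ s, (μ s : ℂ) • F s)
    (hsum : (∑ s, F s) = 1)
    (horth : ∀ r s, r ≠ s → F r * F s = 0)
    (t : ℝ) :
    NormedSpace.exp (((t : ℂ) * Complex.I) • (A₁ ⊗ₖ A₂)) =
      ∑ s, (NormedSpace.exp ((((μ s * t : ℝ) : ℂ) * Complex.I) • A₁)) ⊗ₖ F s := by
  have hF : CompleteOrthogonalIdempotents F :=
    CompleteOrthogonalIdempotents.iff_ortho_complete.mpr ⟨fun r s => horth r s, hsum⟩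
  rw [← smul_kronecker, hdec, exp_kronecker_sum_smul hF]
  congr! 3 with s
  rw [smul_smul]
  congr 1
  push_cast
  ring

theorem exp_kronecker_spectral {m p : Type*} [Fintype m] [DecidableEq m]
    [Fintype p] [DecidableEq p] (q : ℕ)
    (A₁ : Matrix m m ℂ) (A₂ : Matrix p p ℂ)
    (hA₁ : A₁.IsHermitian) (hA₂ : A₂.IsHermitian)
    (μ : Fin q → ℝ) (F : Fin q → Matrix p p ℂ)
    (hdec : A₂ = ∑ s, (μ s : ℂ) • F s)
    (hsum : (∑ s, F s) = 1)
    (hproj : ∀ s, F s * F s = F s)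
    (horth : ∀ r s, r ≠ s → F r * F s = 0)
    (t : ℝ) :
    NormedSpace.exp (((t : ℂ) * Complex.I) • (A₁ ⊗ₖ A₂)) =
      ∑ s, (NormedSpace.exp ((((μ s * t : ℝ) : ℂ) * Complex.I) • A₁)) ⊗ₖ F s :=
  exp_kronecker_spectral_general q A₁ A₂ μ F hdec hsum horth t
end

section
/- Let C ⊆ (Z_2)^n be such that the sum of the elements of C is 0 and |C| ≡ 0 (mod 4). Then for every symmetric matrix B with integer eigenvalues, exp(i(π/2)(A ⊗ B)) = I, where A is the adjacency matrix of the cubelike graph X(C). -/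
open Matrix Kronecker Complex

/-!
The characters `v ↦ (-1) ^ (u ⬝ᵥ v)` of `(ZMod 2)^n` form the Walsh–Hadamard matrix `W`, with
`W * W = 2^n • 1`, and `W` diagonalizes the Cayley graph: `A = W * diag λ * W⁻¹` with
`λ_w = ∑_{x ∈ C} (-1) ^ (x ⬝ᵥ w)`. Writing `λ_w = |C| - 2 N_w` with `N_w = #{x ∈ C | x ⬝ᵥ w = 1}`,
the hypothesis `∑ C = 0` makes `N_w` even and so `4 ∣ λ_w`. Diagonalizing `B` unitarily,
`A ⊗ B` is conjugate to a diagonal matrix with entries `λ_w μ_j ∈ 4ℤ`, and `exp (iπ/2 · 4m) = 1`.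
-/

open NormedSpace Finset

namespace Matrix

variable {m p 𝔸 : Type*} [Fintype m] [DecidableEq m] [Fintype p] [DecidableEq p]
  [NormedCommRing 𝔸] [NormedAlgebra ℚ 𝔸] [CompleteSpace 𝔸]

theorem exp_conj_diagonal_eq_one {P Q : Matrix m m 𝔸} (hPQ : P * Q = 1) {d : m → 𝔸}
    (hd : ∀ i, exp (d i) = 1) : exp (P * diagonal d * Q) = 1 := by
  obtain rfl : Q = P⁻¹ := (inv_eq_right_inv hPQ).symm
  have hexp : exp d = fun _ => 1 := funext fun i => by rw [Pi.coe_exp, hd]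
  rw [exp_conj _ _ (.of_mul_eq_one _ hPQ), exp_diagonal, hexp, diagonal_one, mul_one, hPQ]

theorem exp_smul_kronecker_eq_one {A P Q : Matrix m m 𝔸} {B R S : Matrix p p 𝔸}
    {d : m → 𝔸} {e : p → 𝔸} (hA : A = P * diagonal d * Q) (hPQ : P * Q = 1)
    (hB : B = R * diagonal e * S) (hRS : R * S = 1) {c : 𝔸}
    (hde : ∀ i j, exp (c * (d i * e j)) = 1) : exp (c • (A ⊗ₖ B)) = 1 := by
  have hconj : c • (A ⊗ₖ B) =
      (P ⊗ₖ R) * diagonal (c • fun x => d x.1 * e x.2) * (Q ⊗ₖ S) := by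
    rw [hA, hB, mul_kronecker_mul, mul_kronecker_mul, diagonal_kronecker_diagonal,
      diagonal_smul, mul_smul_comm, smul_mul_assoc]
  rw [hconj]
  exact exp_conj_diagonal_eq_one (by rw [← mul_kronecker_mul, hPQ, hRS, one_kronecker_one])
    fun x => hde x.1 x.2

theorem IsHermitian.eq_mul_diagonal_mul_star {B : Matrix p p ℂ} (hB : B.IsHermitian) :
    B = (hB.eigenvectorUnitary : Matrix p p ℂ) * diagonal (fun j => (hB.eigenvalues j : ℂ)) *
      star (hB.eigenvectorUnitary : Matrix p p ℂ) := by
  simpa [Function.comp_def] using hB.spectral_theorem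

end Matrix

section Walsh

variable {R ι : Type*} [Fintype ι] [DecidableEq ι]

theorem neg_one_pow_val_add [Ring R] (a b : ZMod 2) :
    (-1 : R) ^ (a + b).val = (-1) ^ a.val * (-1) ^ b.val := by
  rw [← pow_add, ZMod.val_add, ← neg_one_pow_eq_pow_mod_two]

theorem sum_neg_one_pow_val_dotProduct_eq_zero [Ring R] {w : ι → ZMod 2} (hw : w ≠ 0) :
    ∑ v, (-1 : R) ^ (w ⬝ᵥ v).val = 0 := by
  obtain ⟨i, hi⟩ := Function.ne_iff.mp hw
  have hwi : w i = 1 := (by decide : ∀ a : ZMod 2, a ≠ 0 → a = 1) _ hi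
  refine sum_ninvolution (· + Pi.single i 1) (fun v => ?_) (fun v _ => ?_) (fun _ => mem_univ _)
    fun v => ?_
  · rw [dotProduct_add, dotProduct_single, hwi, mul_one, neg_one_pow_val_add, ZMod.val_one,
      pow_one, mul_neg_one, add_neg_cancel]
  · simp
  · rw [add_assoc, ZModModule.add_self, add_zero]

variable (R ι) in
def walshMatrix [Ring R] : Matrix (ι → ZMod 2) (ι → ZMod 2) R :=
  of fun u v => (-1) ^ (u ⬝ᵥ v).val

theorem walshMatrix_mul_self [Ring R] :
    walshMatrix R ι * walshMatrix R ι = (2 ^ Fintype.card ι : R) • 1 := by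
  ext u w
  have hchar : ∀ v, (-1 : R) ^ (u ⬝ᵥ v).val * (-1) ^ (v ⬝ᵥ w).val = (-1) ^ ((u + w) ⬝ᵥ v).val :=
    fun v => by rw [add_dotProduct, neg_one_pow_val_add, dotProduct_comm v w]
  simp only [walshMatrix, mul_apply, of_apply, hchar, Matrix.smul_apply, one_apply, smul_eq_mul]
  by_cases huw : u = w
  · simp [huw, ZModModule.add_self]
  · have hsum : u + w ≠ 0 := by rwa [Ne, add_eq_zero_iff_eq_neg, ZModModule.neg_eq_self]
    rw [sum_neg_one_pow_val_dotProduct_eq_zero hsum]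
    simp [huw]

theorem walshMatrix_mul_smul_walshMatrix [Field R] [NeZero (2 : R)] :
    walshMatrix R ι * ((2 ^ Fintype.card ι : R)⁻¹ • walshMatrix R ι) = 1 := by
  rw [mul_smul_comm, walshMatrix_mul_self, smul_smul,
    inv_mul_cancel₀ (pow_ne_zero _ two_ne_zero), one_smul]

end Walsh

def cayleyEigenvalue {ι : Type*} [Fintype ι] (C : Finset (ι → ZMod 2)) (w : ι → ZMod 2) : ℤ :=
  ∑ x ∈ C, (-1) ^ (x ⬝ᵥ w).val

theorem four_dvd_sum_neg_one_pow_val {α : Type*} {s : Finset α} {f : α → ZMod 2}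
    (hf : ∑ x ∈ s, f x = 0) (hs : 4 ∣ #s) : (4 : ℤ) ∣ ∑ x ∈ s, (-1) ^ (f x).val := by
  have hsign : ∀ a : ZMod 2, (-1 : ℤ) ^ a.val = 1 - 2 * a.val := by decide
  have heven : 2 ∣ ∑ x ∈ s, (f x).val := by
    rw [← ZMod.natCast_eq_zero_iff]
    push_cast [ZMod.natCast_val, ZMod.cast_id]
    exact hf
  obtain ⟨k, hk⟩ := heven
  obtain ⟨a, ha⟩ := hs
  refine ⟨a - k, ?_⟩
  simp only [hsign, sum_sub_distrib, sum_const, ← mul_sum]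
  push_cast [ha, ← Nat.cast_sum, hk]
  ring

theorem four_dvd_cayleyEigenvalue {ι : Type*} [Fintype ι] {C : Finset (ι → ZMod 2)}
    (hC : ∑ x ∈ C, x = 0) (hcard : 4 ∣ #C) (w : ι → ZMod 2) : 4 ∣ cayleyEigenvalue C w :=
  four_dvd_sum_neg_one_pow_val (f := (· ⬝ᵥ w)) (by rw [← sum_dotProduct, hC, zero_dotProduct]) hcard

theorem cubeAdj_mul_walshMatrix {n : ℕ} (C : Finset (Fin n → ZMod 2)) :
    cubeAdj C * walshMatrix ℂ (Fin n) =
      walshMatrix ℂ (Fin n) * diagonal fun w => (cayleyEigenvalue C w : ℂ) := by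
  ext u w
  have hshift : ∀ x, u - (u + x) = x := fun x => by
    rw [ZModModule.sub_eq_add, ← add_assoc, ZModModule.add_self, zero_add]
  calc ∑ v, cubeAdj C u v * walshMatrix ℂ (Fin n) v w
      = ∑ x ∈ C, (-1 : ℂ) ^ ((u + x) ⬝ᵥ w).val := by
        rw [← Equiv.sum_comp (Equiv.addLeft u)]
        simp [cubeAdj, walshMatrix, hshift, sum_ite_mem]
    _ = walshMatrix ℂ (Fin n) u w * cayleyEigenvalue C w := by
        simp [walshMatrix, cayleyEigenvalue, add_dotProduct, neg_one_pow_val_add, mul_sum]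
    _ = _ := by rw [mul_diagonal]

theorem cubeAdj_eq_walshMatrix_conj {n : ℕ} (C : Finset (Fin n → ZMod 2)) :
    cubeAdj C = walshMatrix ℂ (Fin n) * (diagonal fun w => (cayleyEigenvalue C w : ℂ)) *
      ((2 ^ Fintype.card (Fin n) : ℂ)⁻¹ • walshMatrix ℂ (Fin n)) := by
  rw [← cubeAdj_mul_walshMatrix, mul_assoc, walshMatrix_mul_smul_walshMatrix, mul_one]

theorem exp_kronecker_identity (n : ℕ) (C : Finset (Fin n → ZMod 2))
    (hσ : (∑ x ∈ C, x) = 0) (hcard : C.card % 4 = 0)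
    {p : Type*} [Fintype p] [DecidableEq p]
    (B : Matrix p p ℂ) (hB : B.IsHermitian)
    (hint : ∀ μ ∈ spectrum ℂ B, ∃ k : ℤ, μ = (k : ℂ)) :
    NormedSpace.exp ((((Real.pi / 2 : ℝ) : ℂ) * Complex.I) • (cubeAdj C ⊗ₖ B)) = 1 := by
  refine exp_smul_kronecker_eq_one (cubeAdj_eq_walshMatrix_conj C)
    walshMatrix_mul_smul_walshMatrix hB.eq_mul_diagonal_mul_star
    (mem_unitaryGroup_iff.mp hB.eigenvectorUnitary.2) fun w j => ?_
  obtain ⟨a, ha⟩ := four_dvd_cayleyEigenvalue hσ (Nat.dvd_of_mod_eq_zero hcard) w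
  obtain ⟨k, hk⟩ := hint _ (spectrum.algebraMap_mem ℂ (hB.eigenvalues_mem_spectrum_real j))
  rw [Complex.coe_algebraMap] at hk
  rw [ha, hk, ← Complex.exp_eq_exp_ℂ, ← Complex.exp_int_mul_two_pi_mul_I (a * k)]
  congr 1
  push_cast
  ring
end

section
/- If a connected vertex-transitive graph admits perfect state transfer between two distinct vertices at some time τ, then the graph has an even number of vertices. -/
/-!
The transition matrix `H = exp (i τ A)` is unitary and symmetric, and every automorphism of the
graph, acting as a permutation matrix commuting with `A`, leaves it invariant. In a unitary matrix
each row contains at most one entry of modulus one. Transporting the entry `H u v` along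
automorphisms sending `u` to `w` therefore gives a map `σ` with `|H w (σ w)| = 1`; the row of `u`
forces `σ` to be fixed-point free and symmetry of `H` forces it to be an involution. So the
vertices split into pairs.
-/

open Matrix Complex

theorem Function.Involutive.even_card_of_forall_ne {α : Type*} [Fintype α] [DecidableEq α]
    {σ : α → α} (hσ : Function.Involutive σ) (hne : ∀ x, σ x ≠ x) :
    Even (Fintype.card α) := by
  have hsq : hσ.toPerm σ ^ 2 ^ 1 = 1 := by
    ext x
    simp [sq, hσ x]
  have hsupp : (hσ.toPerm σ).supportᶜ = ∅ := by
    ext x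
    simp [hne x]
  have := Equiv.Perm.card_compl_support_modEq (p := 2) hsq
  rw [hsupp, Finset.card_empty] at this
  exact Nat.even_iff.mpr this.symm

namespace Matrix

variable {n : Type*} [Fintype n] [DecidableEq n]

theorem sum_norm_sq_row_eq_one {𝕜 : Type*} [RCLike 𝕜] {U : Matrix n n 𝕜}
    (hU : U ∈ unitaryGroup n 𝕜) (i : n) : ∑ j, ‖U i j‖ ^ 2 = 1 := by
  have hdiag : (U * Uᴴ) i i = 1 := by
    rw [← star_eq_conjTranspose, mem_unitaryGroup_iff.mp hU, one_apply_eq]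
  simp only [mul_apply, conjTranspose_apply, ← starRingEnd_apply, RCLike.mul_conj] at hdiag
  exact_mod_cast hdiag

theorem eq_of_norm_apply_eq_one {𝕜 : Type*} [RCLike 𝕜] {U : Matrix n n 𝕜}
    (hU : U ∈ unitaryGroup n 𝕜) {i j k : n} (hj : ‖U i j‖ = 1) (hk : ‖U i k‖ = 1) : j = k := by
  by_contra hjk
  have : ∑ l ∈ {j, k}, ‖U i l‖ ^ 2 ≤ ∑ l, ‖U i l‖ ^ 2 :=
    Finset.sum_le_sum_of_subset_of_nonneg (Finset.subset_univ _) fun _ _ _ => sq_nonneg _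
  rw [Finset.sum_pair hjk, hj, hk, sum_norm_sq_row_eq_one hU] at this
  norm_num at this

theorem IsHermitian.exp_ofReal_mul_I_smul_mem_unitaryGroup {A : Matrix n n ℂ}
    (hA : A.IsHermitian) (t : ℝ) :
    NormedSpace.exp (((t : ℂ) * I) • A) ∈ unitaryGroup n ℂ := by
  set B := ((t : ℂ) * I) • A
  have hB : Bᴴ = -B := by
    simp only [B, conjTranspose_smul, hA.eq, star_mul', Complex.star_def, conj_ofReal, conj_I,
      mul_neg, neg_smul]
  rw [mem_unitaryGroup_iff, star_eq_conjTranspose, ← exp_conjTranspose, hB,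
    ← exp_add_of_commute _ _ (Commute.refl B).neg_right, add_neg_cancel, NormedSpace.exp_zero]

theorem submatrix_self_eq_iff_commute {α : Type*} [NonAssocSemiring α] (A : Matrix n n α)
    (e : n ≃ n) : A.submatrix e e = A ↔ Commute e.toPEquiv.toMatrix A := by
  rw [Commute, SemiconjBy, PEquiv.toMatrix_toPEquiv_mul, PEquiv.mul_toMatrix_toPEquiv]
  constructor
  · intro h
    ext i j
    simpa using congrFun (congrFun h i) (e.symm j)
  · intro h
    ext i j
    simpa using congrFun (congrFun h i) (e j)

theorem exp_submatrix_self_eq {𝔸 : Type*} [Ring 𝔸] [TopologicalSpace 𝔸] [IsTopologicalRing 𝔸]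
    [T2Space 𝔸] {A : Matrix n n 𝔸} {e : n ≃ n} (h : A.submatrix e e = A) :
    (NormedSpace.exp A).submatrix e e = NormedSpace.exp A :=
  (submatrix_self_eq_iff_commute _ e).mpr ((submatrix_self_eq_iff_commute A e).mp h).exp_right

theorem IsSymm.even_card_of_norm_apply_eq_one {𝕜 : Type*} [RCLike 𝕜] {H : Matrix n n 𝕜}
    (hH : H.IsSymm) (hU : H ∈ unitaryGroup n 𝕜) {u v : n}
    (htrans : ∀ w, ∃ e : n ≃ n, e u = w ∧ H.submatrix e e = H)
    (huv : u ≠ v) (h : ‖H u v‖ = 1) : Even (Fintype.card n) := by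
  choose e heu he using htrans
  have hinv : ∀ w x y, H (e w x) (e w y) = H x y := fun w x y =>
    congrFun (congrFun (he w) x) y
  set σ : n → n := fun w => e w v
  have hσ : ∀ w, ‖H w (σ w)‖ = 1 := fun w => by
    rw [show H w (σ w) = H u v by simpa only [heu] using hinv w u v, h]
  have hne : ∀ w, σ w ≠ w := fun w hw => by
    have hww : ‖H w w‖ = 1 := by simpa only [hw] using hσ w
    rw [← heu w, hinv] at hww
    exact huv (eq_of_norm_apply_eq_one hU hww h)
  have hσσ : Function.Involutive σ := fun w =>
    eq_of_norm_apply_eq_one hU (hσ (σ w)) (by rw [← hH.apply, hσ])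
  exact hσσ.even_card_of_forall_ne hne

end Matrix

theorem SimpleGraph.Iso.adjMatrix_submatrix {V W α : Type*} [Zero α] [One α]
    {G : SimpleGraph V} {G' : SimpleGraph W} [DecidableRel G.Adj] [DecidableRel G'.Adj]
    (φ : G ≃g G') : (G'.adjMatrix α).submatrix φ φ = G.adjMatrix α := by
  ext i j
  simp [SimpleGraph.adjMatrix_apply, φ.map_adj_iff]

theorem vertex_transitive_pst_even_order_general {V : Type*} [Fintype V] [DecidableEq V]
    (G : SimpleGraph V) [DecidableRel G.Adj]
    (htrans : ∀ u v : V, ∃ φ : G ≃g G, φ u = v)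
    (u v : V) (huv : u ≠ v) (τ : ℝ)
    (hpst : ‖
      (NormedSpace.exp (((τ : ℂ) * Complex.I) • G.adjMatrix ℂ) u v)‖ = 1) :
    Even (Fintype.card V) := by
  refine (G.isSymm_adjMatrix.smul _).exp.even_card_of_norm_apply_eq_one
    ((G.isHermitian_adjMatrix ℂ).exp_ofReal_mul_I_smul_mem_unitaryGroup τ) (fun w => ?_) huv hpst
  obtain ⟨φ, hφ⟩ := htrans u w
  exact ⟨φ.toEquiv, hφ,
    exp_submatrix_self_eq (congrArg (((τ : ℂ) * Complex.I) • ·) (φ.adjMatrix_submatrix (α := ℂ)))⟩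

theorem vertex_transitive_pst_even_order {V : Type*} [Fintype V] [DecidableEq V]
    (G : SimpleGraph V) [DecidableRel G.Adj]
    (hconn : G.Connected)
    (htrans : ∀ u v : V, ∃ φ : G ≃g G, φ u = v)
    (u v : V) (huv : u ≠ v) (τ : ℝ)
    (hpst : ‖
      (NormedSpace.exp (((τ : ℂ) * Complex.I) • G.adjMatrix ℂ) u v)‖ = 1) :
    Even (Fintype.card V) :=
  vertex_transitive_pst_even_order_general G htrans u v huv τ hpst
end

section
/- For any integer n ≥ 1 and divisor d = 2^k of 2^n with 0 ≤ k ≤ n, the map sending z ∈ Z_{2^n} to its binary digit vector (z₀,…,z_{n−1}) ∈ (Z_2)^n is a graph isomorphism from Cay(Z_{2^n}, S(d)) to the cubelike graph X(C_d), where S(d) = {z ∈ Z_{2^n} : gcd(z, 2^n) = d} and C_d = {(c₀,…,c_{n−1}) ∈ (Z_2)^n : c_j = 0 for j < k and c_k = 1}. -/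
/-- The binary digit map `z ↦ (z₀, …, z_{n-1})` from `ℤ/2ⁿ` to `(ℤ/2)ⁿ`. -/
def binDigits (n : ℕ) (z : ZMod (2 ^ n)) : Fin n → ZMod 2 :=
  fun i => ((z.val / 2 ^ (i : ℕ)) % 2 : ℕ)

/-- The connection set `C_d` for the divisor `d = 2^k`. -/
def Cdiv (n k : ℕ) : Set (Fin n → ZMod 2) :=
  {c | ∀ j : Fin n, ((j : ℕ) < k → c j = 0) ∧ ((j : ℕ) = k → c j = 1)}

/-! Both sides of the equivalence are read off the bits of `u.val` and `v.val`: `2^m` divides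
`(u - v).val` exactly when `u` and `v` agree in their `m` lowest bits, so `gcd(u - v, 2ⁿ) = 2ᵏ`
says that the lowest `k` bits agree and bit `k` differs, which is membership of the digit
difference in `C_{2^k}`. -/

lemma mod_two_pow_eq_iff_testBit_eq {a b m : ℕ} :
    a % 2 ^ m = b % 2 ^ m ↔ ∀ j < m, a.testBit j = b.testBit j := by
  refine ⟨fun h j hj => ?_, fun h => Nat.eq_of_testBit_eq fun j => ?_⟩
  · simpa [Nat.testBit_mod_two_pow, hj] using congrArg (Nat.testBit · j) h
  · by_cases hj : j < m <;> simp [Nat.testBit_mod_two_pow, hj, h]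

lemma dvd_val_sub_iff {N d : ℕ} [NeZero N] (hd : d ∣ N) (u v : ZMod N) :
    d ∣ (u - v).val ↔ u.val % d = v.val % d := by
  have val_cast (w : ZMod N) : ((w.val : ℕ) : ZMod d) = ZMod.castHom hd (ZMod d) w := by
    rw [ZMod.natCast_val, ZMod.castHom_apply]
  rw [← ZMod.natCast_eq_zero_iff, val_cast, map_sub, sub_eq_zero, ← val_cast, ← val_cast,
    ZMod.natCast_eq_natCast_iff']

lemma two_pow_dvd_val_sub_iff {n m : ℕ} (hm : m ≤ n) (u v : ZMod (2 ^ n)) :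
    2 ^ m ∣ (u - v).val ↔ ∀ j < m, u.val.testBit j = v.val.testBit j := by
  rw [dvd_val_sub_iff (pow_dvd_pow 2 hm), mod_two_pow_eq_iff_testBit_eq]

lemma gcd_prime_pow_eq_pow_iff {p x n k : ℕ} (hp : p.Prime) (hk : k ≤ n) :
    x.gcd (p ^ n) = p ^ k ↔ p ^ k ∣ x ∧ (k < n → ¬ p ^ (k + 1) ∣ x) := by
  obtain ⟨m, hmn, hgcd⟩ := (Nat.dvd_prime_pow hp).1 (Nat.gcd_dvd_right x (p ^ n))
  have pow_dvd_iff : ∀ j ≤ n, p ^ j ∣ x ↔ j ≤ m := fun j hj => by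
    rw [← Nat.pow_dvd_pow_iff_le_right hp.one_lt, ← hgcd, Nat.dvd_gcd_iff,
      and_iff_left (pow_dvd_pow p hj)]
  rw [hgcd, (Nat.pow_right_injective hp.two_le).eq_iff, pow_dvd_iff k hk]
  constructor
  · rintro rfl
    exact ⟨le_rfl, fun hkn h => by have := (pow_dvd_iff (m + 1) hkn).1 h; omega⟩
  · rintro ⟨hkm, hmk⟩
    rcases hk.lt_or_eq with hkn | rfl
    · have := mt (pow_dvd_iff (k + 1) hkn).2 (hmk hkn)
      omega
    · omega

lemma gcd_val_sub_eq_two_pow_iff {n k : ℕ} (hk : k ≤ n) (u v : ZMod (2 ^ n)) :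
    (u - v).val.gcd (2 ^ n) = 2 ^ k ↔
      (∀ j < k, u.val.testBit j = v.val.testBit j) ∧
        (k < n → u.val.testBit k ≠ v.val.testBit k) := by
  rw [gcd_prime_pow_eq_pow_iff Nat.prime_two hk, two_pow_dvd_val_sub_iff hk]
  refine and_congr_right fun hlow => imp_congr_right fun hkn => ?_
  rw [two_pow_dvd_val_sub_iff hkn, Nat.forall_lt_succ_right]
  exact not_congr (and_iff_right hlow)

lemma binDigits_apply_eq_iff {n : ℕ} (u v : ZMod (2 ^ n)) (i : Fin n) :
    binDigits n u i = binDigits n v i ↔ u.val.testBit i = v.val.testBit i := by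
  simp only [binDigits, ← Nat.toNat_testBit]
  cases u.val.testBit i <;> cases v.val.testBit i <;> decide

lemma binDigits_injective (n : ℕ) : Function.Injective (binDigits n) := fun u v h => by
  refine ZMod.val_injective _ ?_
  rw [← Nat.mod_eq_of_lt u.val_lt, ← Nat.mod_eq_of_lt v.val_lt, mod_two_pow_eq_iff_testBit_eq]
  exact fun j hj => (binDigits_apply_eq_iff u v ⟨j, hj⟩).1 (congrFun h _)

lemma sub_mem_Cdiv_iff {n k : ℕ} (c d : Fin n → ZMod 2) :
    c - d ∈ Cdiv n k ↔
      (∀ j : Fin n, (j : ℕ) < k → c j = d j) ∧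
        ∀ j : Fin n, (j : ℕ) = k → c j ≠ d j := by
  have sub_eq_one_iff : ∀ x y : ZMod 2, x - y = 1 ↔ x ≠ y := by decide
  simp only [Cdiv, Set.mem_ofPred_eq, Pi.sub_apply, sub_eq_zero, sub_eq_one_iff,
    forall_and]

lemma binDigits_sub_mem_Cdiv_iff {n k : ℕ} (hk : k ≤ n) (u v : ZMod (2 ^ n)) :
    binDigits n u - binDigits n v ∈ Cdiv n k ↔
      (∀ j < k, u.val.testBit j = v.val.testBit j) ∧
        (k < n → u.val.testBit k ≠ v.val.testBit k) := by
  simp only [sub_mem_Cdiv_iff, ne_eq, binDigits_apply_eq_iff]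
  refine and_congr ⟨fun h j hj => h ⟨j, hj.trans_le hk⟩ hj, fun h j => h j⟩ ?_
  exact ⟨fun h hkn => h ⟨k, hkn⟩ rfl, fun h j hj => hj ▸ h (hj ▸ j.isLt)⟩

theorem gcd_graph_iso_cubelike_cyclic_general (n k : ℕ) (hk : k ≤ n) :
    Function.Bijective (binDigits n) ∧
      ∀ u v : ZMod (2 ^ n),
        (Nat.gcd (u - v).val (2 ^ n) = 2 ^ k ↔
          binDigits n u - binDigits n v ∈ Cdiv n k) :=
  ⟨(Fintype.bijective_iff_injective_and_card _).2
      ⟨binDigits_injective n, by simp [ZMod.card]⟩,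
    fun u v => (gcd_val_sub_eq_two_pow_iff hk u v).trans (binDigits_sub_mem_Cdiv_iff hk u v).symm⟩

theorem gcd_graph_iso_cubelike_cyclic (n k : ℕ) (hn : 1 ≤ n) (hk : k ≤ n) :
    Function.Bijective (binDigits n) ∧
      ∀ u v : ZMod (2 ^ n),
        (Nat.gcd (u - v).val (2 ^ n) = 2 ^ k ↔
          binDigits n u - binDigits n v ∈ Cdiv n k) :=
  gcd_graph_iso_cubelike_cyclic_general n k hk
end

section
/- Let C ⊆ (Z_2)^n with Σ_{x∈C} x = 0 and |C| odd, let A be the adjacency matrix of X(C), and let B be a symmetric integer-spectrum matrix with spectral decomposition B = Σ_s μ_s F_s. Then exp(i π (A ⊗ B)) is a unimodular scalar multiple of the identity if and only if all eigenvalues μ_s of B have the same parity. -/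
/-! The adjacency matrix `A` of `X(C)` is the sum of the commuting involutions `shiftMatrix x`,
`x ∈ C`. For an involution `J`, the matrix `J ⊗ B` is diagonalised by the complete orthogonal
idempotents `((1 ± J) / 2) ⊗ F s`, with eigenvalues `± μ s`; since `exp (± i π μ) = (-1) ^ μ`, this
gives `exp (i π (J ⊗ B)) = 1 ⊗ U` with `U = ∑ s, (-1) ^ (μ s) • F s`. Hence
`exp (i π (A ⊗ B)) = 1 ⊗ U ^ |C| = 1 ⊗ U` because `U ^ 2 = 1` and `|C|` is odd, and `1 ⊗ U` is a
scalar exactly when all the signs `(-1) ^ (μ s)` agree. -/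

open Matrix Kronecker Complex

open Real

section Idempotents

variable {𝕜 A ι : Type*} [Fintype ι] {e : ι → A}

theorem OrthogonalIdempotents.sum_smul_mul_sum_smul [CommSemiring 𝕜] [Semiring A] [Algebra 𝕜 A]
    (he : OrthogonalIdempotents e) (a b : ι → 𝕜) :
    (∑ i, a i • e i) * ∑ i, b i • e i = ∑ i, (a i * b i) • e i := by
  classical
  simp_rw [Finset.sum_mul, Finset.mul_sum, smul_mul_smul_comm, he.mul_eq, smul_ite, smul_zero,
    Finset.sum_ite_eq, Finset.mem_univ, if_true]

theorem CompleteOrthogonalIdempotents.sum_smul_pow [CommSemiring 𝕜] [Semiring A] [Algebra 𝕜 A]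
    (he : CompleteOrthogonalIdempotents e) (c : ι → 𝕜) (k : ℕ) :
    (∑ i, c i • e i) ^ k = ∑ i, c i ^ k • e i := by
  induction k with
  | zero => simp [he.complete]
  | succ k ih => simp_rw [pow_succ, ih, he.sum_smul_mul_sum_smul]

theorem CompleteOrthogonalIdempotents.sum_smul_eq_smul_one_iff [Field 𝕜] [Ring A] [Algebra 𝕜 A]
    [NoZeroSMulDivisors 𝕜 A] (he : CompleteOrthogonalIdempotents e) (hne : ∀ i, e i ≠ 0)
    (a : ι → 𝕜) (c : 𝕜) :
    ∑ i, a i • e i = c • 1 ↔ ∀ i, a i = c := by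
  classical
  refine ⟨fun h i => smul_left_injective 𝕜 (hne i) ?_, fun h => ?_⟩
  · simpa [Finset.sum_mul, smul_mul_assoc, he.mul_eq] using congrArg (· * e i) h
  · simp [h, ← Finset.smul_sum, he.complete]

theorem CompleteOrthogonalIdempotents.exp_sum_smul [RCLike 𝕜] [NormedRing A] [NormedAlgebra 𝕜 A]
    [CompleteSpace A] (he : CompleteOrthogonalIdempotents e) (c : ι → 𝕜) :
    NormedSpace.exp (∑ i, c i • e i) = ∑ i, NormedSpace.exp (c i) • e i := by
  refine (NormedSpace.exp_series_hasSum_exp' (𝕂 := 𝕜) _).unique ?_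
  simp_rw [he.sum_smul_pow, Finset.smul_sum, smul_smul]
  exact hasSum_sum fun i _ => by
    simpa [smul_eq_mul] using (NormedSpace.exp_series_hasSum_exp' (𝕂 := 𝕜) (c i)).smul_const (e i)

end Idempotents

section Kronecker

variable {R l m n o : Type*} [CommSemiring R]

theorem Matrix.sum_kronecker {ι : Type*} (s : Finset ι) (A : ι → Matrix l m R)
    (B : Matrix n o R) : (∑ i ∈ s, A i) ⊗ₖ B = ∑ i ∈ s, A i ⊗ₖ B := by
  ext
  simp [Matrix.sum_apply, Finset.sum_mul]

theorem Matrix.kronecker_sum {ι : Type*} (s : Finset ι) (A : Matrix l m R)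
    (B : ι → Matrix n o R) : A ⊗ₖ (∑ i ∈ s, B i) = ∑ i ∈ s, A ⊗ₖ B i := by
  ext
  simp [Matrix.sum_apply, Finset.mul_sum]

theorem Commute.kronecker [Fintype m] [Fintype n] {A A' : Matrix m m R} {B B' : Matrix n n R}
    (hA : Commute A A') (hB : Commute B B') : Commute (A ⊗ₖ B) (A' ⊗ₖ B') := by
  rw [Commute, SemiconjBy, ← mul_kronecker_mul, ← mul_kronecker_mul, hA.eq, hB.eq]

theorem Matrix.one_kronecker_pow [Fintype m] [DecidableEq m] [Fintype n] [DecidableEq n]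
    (A : Matrix n n R) (k : ℕ) : ((1 : Matrix m m R) ⊗ₖ A) ^ k = 1 ⊗ₖ (A ^ k) := by
  induction k with
  | zero => simp
  | succ k ih => rw [pow_succ, ih, ← mul_kronecker_mul, one_mul, pow_succ]

theorem Matrix.one_kronecker_eq_smul_one_iff [DecidableEq m] [DecidableEq n] [Nonempty m]
    (A : Matrix n n R) (c : R) : (1 : Matrix m m R) ⊗ₖ A = c • 1 ↔ A = c • 1 := by
  refine ⟨fun h => ?_, fun h => by rw [h, kronecker_smul, one_kronecker_one]⟩
  obtain ⟨u⟩ := ‹Nonempty m›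
  ext i j
  simpa [one_apply] using congrFun (congrFun h (u, i)) (u, j)

theorem CompleteOrthogonalIdempotents.kronecker [Fintype m] [DecidableEq m] [Fintype n]
    [DecidableEq n] {ι κ : Type*} [Fintype ι] [Fintype κ] {e : ι → Matrix m m R}
    {f : κ → Matrix n n R} (he : CompleteOrthogonalIdempotents e)
    (hf : CompleteOrthogonalIdempotents f) :
    CompleteOrthogonalIdempotents fun ij : ι × κ => e ij.1 ⊗ₖ f ij.2 where
  idem ij := by rw [IsIdempotentElem, ← mul_kronecker_mul, (he.idem _).eq, (hf.idem _).eq]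
  ortho := by
    rintro ⟨i, j⟩ ⟨i', j'⟩ hne
    simp only [← mul_kronecker_mul]
    by_cases hi : i = i'
    · subst hi
      rw [hf.ortho fun hj => hne (by rw [hj]), kronecker_zero]
    · rw [he.ortho hi, zero_kronecker]
  complete := by
    rw [Fintype.sum_prod_type]
    simp_rw [← kronecker_sum, hf.complete, ← sum_kronecker, he.complete, one_kronecker_one]

end Kronecker

theorem Matrix.exp_sum_smul_of_completeOrthogonalIdempotents {m ι : Type*} [Fintype m]
    [DecidableEq m] [Fintype ι] {e : ι → Matrix m m ℂ} (he : CompleteOrthogonalIdempotents e)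
    (c : ι → ℂ) : NormedSpace.exp (∑ i, c i • e i) = ∑ i, Complex.exp (c i) • e i := by
  rw [Complex.exp_eq_exp_ℂ]
  exact open scoped Norms.Operator in he.exp_sum_smul c

theorem Complex.exp_pi_mul_I_mul_intCast (k : ℤ) : exp (π * I * k) = k.negOnePow := by
  rw [mul_comm, exp_int_mul, exp_pi_mul_I, Int.cast_negOnePow]

theorem Int.units_pow_of_odd (u : ℤˣ) {k : ℕ} (hk : Odd k) : u ^ k = u := by
  obtain ⟨j, rfl⟩ := hk
  rw [pow_succ, pow_mul, Int.units_pow_two, one_pow, one_mul]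

theorem Int.negOnePow_eq_negOnePow_iff (a b : ℤ) :
    a.negOnePow = b.negOnePow ↔ a % 2 = b % 2 := by
  rw [Int.negOnePow_eq_iff, even_iff_two_dvd, ← Int.ModEq, Int.modEq_iff_dvd, dvd_sub_comm]

theorem exp_pi_mul_I_smul_kronecker_of_mul_self_eq_one {m p ι : Type*} [Fintype m]
    [DecidableEq m] [Fintype p] [DecidableEq p] [Fintype ι] {J : Matrix m m ℂ} (hJ : J * J = 1)
    {F : ι → Matrix p p ℂ} (hF : CompleteOrthogonalIdempotents F) (μ : ι → ℤ) :
    NormedSpace.exp (((π : ℂ) * I) • (J ⊗ₖ ∑ s, (μ s : ℂ) • F s)) =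
      1 ⊗ₖ ∑ s, ((μ s).negOnePow : ℂ) • F s := by
  set E : Matrix m m ℂ := (2⁻¹ : ℂ) • (1 + J) with hE_def
  have hE : IsIdempotentElem E := by
    rw [IsIdempotentElem, hE_def, smul_mul_smul_comm, add_mul, one_mul, mul_add, mul_one, hJ,
      add_comm J 1, ← two_smul ℂ (1 + J), smul_smul]
    norm_num
  have hP := CompleteOrthogonalIdempotents.of_isIdempotentElem hE
  have hJE : J = ∑ i, ((![1, -1] i : ℤ) : ℂ) • ![E, 1 - E] i := by
    simp only [Fin.sum_univ_two, hE_def, cons_val_zero, cons_val_one, Int.cast_one, Int.cast_neg]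
    module
  have hdecomp : ((π : ℂ) * I) • (J ⊗ₖ ∑ s, (μ s : ℂ) • F s) =
      ∑ is : Fin 2 × ι,
        ((π : ℂ) * I * ((![1, -1] is.1 * μ is.2 : ℤ) : ℂ)) • (![E, 1 - E] is.1 ⊗ₖ F is.2) := by
    rw [hJE, sum_kronecker, Fintype.sum_prod_type, Finset.smul_sum]
    simp_rw [kronecker_sum, Finset.smul_sum, smul_kronecker, kronecker_smul, smul_smul,
      Int.cast_mul]
  have hsign : ∀ (i : Fin 2) k, (![1, -1] i * k : ℤ).negOnePow = k.negOnePow := by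
    intro i k
    fin_cases i <;> simp
  rw [hdecomp, exp_sum_smul_of_completeOrthogonalIdempotents (hP.kronecker hF)]
  simp_rw [Complex.exp_pi_mul_I_mul_intCast, hsign]
  rw [Fintype.sum_prod_type_right]
  simp_rw [← Finset.smul_sum, ← sum_kronecker, hP.complete, kronecker_sum, kronecker_smul]

section ShiftMatrix

variable {G R : Type*} [AddCommGroup G] [DecidableEq G] [Semiring R]

def shiftMatrix (x : G) : Matrix G G R := of fun u v => if u - v = x then 1 else 0

theorem shiftMatrix_zero : (shiftMatrix 0 : Matrix G G R) = 1 := by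
  ext u v
  simp [shiftMatrix, one_apply, sub_eq_zero]

theorem shiftMatrix_add [Fintype G] (x y : G) :
    (shiftMatrix (x + y) : Matrix G G R) = shiftMatrix x * shiftMatrix y := by
  ext u w
  simp only [shiftMatrix, of_apply, mul_apply, ite_mul, one_mul, zero_mul]
  rw [Fintype.sum_eq_single (u - x) fun v hv => if_neg fun h => hv (by rw [← h, sub_sub_cancel])]
  simp only [sub_sub_cancel, if_true, sub_right_comm u x, sub_eq_iff_eq_add' (a := u - w)]

theorem shiftMatrix_commute [Fintype G] (x y : G) :
    Commute (shiftMatrix x : Matrix G G R) (shiftMatrix y) := by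
  rw [Commute, SemiconjBy, ← shiftMatrix_add, ← shiftMatrix_add, add_comm]

theorem shiftMatrix_mul_self [Fintype G] {x : G} (hx : x + x = 0) :
    (shiftMatrix x : Matrix G G R) * shiftMatrix x = 1 := by
  rw [← shiftMatrix_add, hx, shiftMatrix_zero]

end ShiftMatrix

theorem cubeAdj_eq_sum_shiftMatrix {n : ℕ} (C : Finset (Fin n → ZMod 2)) :
    cubeAdj C = ∑ x ∈ C, shiftMatrix x := by
  ext u v
  simp [cubeAdj, shiftMatrix, Matrix.sum_apply, Finset.sum_ite_eq]

theorem exp_pi_mul_I_smul_cubeAdj_kronecker {n : ℕ} {p ι : Type*} [Fintype p] [DecidableEq p]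
    [Fintype ι] (C : Finset (Fin n → ZMod 2)) {F : ι → Matrix p p ℂ}
    (hF : CompleteOrthogonalIdempotents F) (μ : ι → ℤ) :
    NormedSpace.exp (((π : ℂ) * I) • (cubeAdj C ⊗ₖ ∑ s, (μ s : ℂ) • F s)) =
      1 ⊗ₖ ∑ s, ((μ s).negOnePow : ℂ) ^ C.card • F s := by
  rw [cubeAdj_eq_sum_shiftMatrix, sum_kronecker, Finset.smul_sum]
  refine (Matrix.exp_sum_of_commute _ _ fun x _ y _ _ => ?_).trans
    ((Finset.noncommProd_eq_pow_card _ _ _ (1 ⊗ₖ ∑ s, ((μ s).negOnePow : ℂ) • F s)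
      fun x _ => ?_).trans ?_)
  · exact (((shiftMatrix_commute x y).kronecker (Commute.refl _)).smul_left _).smul_right _
  · exact exp_pi_mul_I_smul_kronecker_of_mul_self_eq_one
      (shiftMatrix_mul_self (ZModModule.add_self x)) hF μ
  · rw [one_kronecker_pow, hF.sum_smul_pow]

theorem periodic_at_pi_iff_same_parity_general (n : ℕ) (C : Finset (Fin n → ZMod 2))
    (hodd : Odd C.card)
    {p : Type*} [Fintype p] [DecidableEq p] (q : ℕ)
    (B : Matrix p p ℂ) (μ : Fin q → ℤ) (F : Fin q → Matrix p p ℂ)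
    (hB : B = ∑ s, (μ s : ℂ) • F s)
    (hsum : (∑ s, F s) = 1)
    (hproj : ∀ s, F s * F s = F s)
    (horth : ∀ r s, r ≠ s → F r * F s = 0)
    (hFne : ∀ s, F s ≠ 0) :
    (∃ γ : ℂ, ‖γ‖ = 1 ∧
        NormedSpace.exp (((Real.pi : ℂ) * Complex.I) • (cubeAdj C ⊗ₖ B)) = γ • 1) ↔
      (∀ s t, μ s % 2 = μ t % 2) := by
  have hF : CompleteOrthogonalIdempotents F := ⟨⟨hproj, horth⟩, hsum⟩
  have hsign : ∀ s, ((μ s).negOnePow : ℂ) ^ C.card = (μ s).negOnePow := fun s => by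
    rw [← Int.cast_pow, ← Units.val_pow_eq_pow_val, Int.units_pow_of_odd _ hodd]
  subst hB
  simp_rw [exp_pi_mul_I_smul_cubeAdj_kronecker C hF μ, hsign, one_kronecker_eq_smul_one_iff,
    hF.sum_smul_eq_smul_one_iff hFne]
  constructor
  · rintro ⟨γ, -, hγ⟩ s t
    rw [← Int.negOnePow_eq_negOnePow_iff, ← Units.val_inj, ← Int.cast_inj (α := ℂ), hγ, hγ]
  · intro hpar
    rcases isEmpty_or_nonempty (Fin q) with hq | ⟨⟨s₀⟩⟩
    · exact ⟨1, norm_one, hq.elim⟩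
    · refine ⟨(μ s₀).negOnePow, by simp, fun s => ?_⟩
      rw [(Int.negOnePow_eq_negOnePow_iff _ _).2 (hpar s s₀)]

theorem periodic_at_pi_iff_same_parity (n : ℕ) (C : Finset (Fin n → ZMod 2))
    (hσ : (∑ x ∈ C, x) = 0) (hodd : Odd C.card)
    {p : Type*} [Fintype p] [DecidableEq p] (q : ℕ)
    (B : Matrix p p ℂ) (μ : Fin q → ℤ) (F : Fin q → Matrix p p ℂ)
    (hB : B = ∑ s, (μ s : ℂ) • F s)
    (hsum : (∑ s, F s) = 1)
    (hproj : ∀ s, F s * F s = F s)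
    (horth : ∀ r s, r ≠ s → F r * F s = 0)
    (hFne : ∀ s, F s ≠ 0) :
    (∃ γ : ℂ, ‖γ‖ = 1 ∧
        NormedSpace.exp (((Real.pi : ℂ) * Complex.I) • (cubeAdj C ⊗ₖ B)) = γ • 1) ↔
      (∀ s t, μ s % 2 = μ t % 2) :=
  periodic_at_pi_iff_same_parity_general n C hodd q B μ F hB hsum hproj horth hFne
end

section
/- Let A be a symmetric complex matrix with exp(iπA) = (−1)^m I for an odd integer m, and let B be a symmetric matrix with integer eigenvalues all of the same parity. Then exp(iπ(A ⊗ B)) is a unimodular scalar multiple of the identity. -/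
/-!
Write `M = πi A` and `B = ∑ μₛ Fₛ`. Then `πi (A ⊗ B) = ∑ₛ Eₛ Xₛ` with orthogonal idempotents
`Eₛ = 1 ⊗ Fₛ` summing to `1` and `Xₛ = μₛ (M ⊗ 1)` commuting with every `Eₜ`, so that
`exp (∑ₛ Eₛ Xₛ) = ∑ₛ Eₛ exp Xₛ`. Since `exp (M ⊗ 1) = exp M ⊗ 1 = -1`, each `exp Xₛ` is
`(-1)^μₛ`, the same sign for every `s`, and the sum collapses to that sign times `∑ₛ Eₛ = 1`.
-/

open Matrix Kronecker Complex NormedSpace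

theorem Int.exists_forall_negOnePow_eq {ι : Type*} {μ : ι → ℤ}
    (hμ : ∀ s t, μ s % 2 = μ t % 2) : ∃ u : ℤˣ, ∀ s, (μ s).negOnePow = u := by
  rcases isEmpty_or_nonempty ι with _ | ⟨⟨t⟩⟩
  · exact ⟨1, isEmptyElim⟩
  · exact ⟨(μ t).negOnePow, fun s =>
      (Int.negOnePow_eq_iff _ _).2 (even_iff_two_dvd.2 (Int.ModEq.dvd (hμ t s)))⟩

theorem Pi.exp_const {ι 𝔸 : Type*} [Ring 𝔸] [TopologicalSpace 𝔸] [IsTopologicalRing 𝔸]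
    [T2Space 𝔸] [Algebra ℚ 𝔸] (x : 𝔸) :
    exp (Function.const ι x) = Function.const ι (exp x) := by
  rcases isEmpty_or_nonempty ι with _ | ⟨⟨i⟩⟩
  · exact Subsingleton.elim _ _
  · simp only [exp_eq_tsum_rat, Function.const_pow, Function.smul_const]
    exact (Function.LeftInverse.map_tsum _ (g := Pi.constAddMonoidHom ι 𝔸)
      (continuous_pi fun _ => continuous_id) (continuous_apply i) fun _ => rfl).symm

namespace Matrix

theorem kronecker_sum_s16 {α l m n p ι : Type*} [NonUnitalNonAssocSemiring α]
    (A : Matrix l m α) (s : Finset ι) (G : ι → Matrix n p α) :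
    A ⊗ₖ (∑ i ∈ s, G i) = ∑ i ∈ s, A ⊗ₖ G i := by
  ext ⟨i, j⟩ ⟨k, l⟩
  simp [Matrix.sum_apply, Finset.mul_sum]

variable {m n α : Type*} [Fintype m] [DecidableEq m] [Fintype n] [DecidableEq n]

theorem exp_kronecker_one [Ring α] [TopologicalSpace α] [IsTopologicalRing α] [T2Space α]
    [Algebra ℚ α] (Y : Matrix m m α) :
    exp (Y ⊗ₖ (1 : Matrix n n α)) = exp Y ⊗ₖ (1 : Matrix n n α) := by
  rw [kronecker_one, kronecker_one, exp_blockDiagonal]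
  exact congrArg blockDiagonal (Pi.exp_const Y)

theorem kronecker_sum_smul_eq_sum_one_kronecker_mul [CommSemiring α] {ι : Type*}
    (N : Matrix m m α) (s : Finset ι) (c : ι → α) (F : ι → Matrix n n α) :
    N ⊗ₖ (∑ i ∈ s, c i • F i) = ∑ i ∈ s, ((1 : Matrix m m α) ⊗ₖ F i) * (c i • (N ⊗ₖ 1)) := by
  rw [kronecker_sum_s16]
  refine Finset.sum_congr rfl fun i _ => ?_
  rw [mul_smul_comm, ← mul_kronecker_mul, one_mul, mul_one, kronecker_smul]

theorem commute_kronecker_one_one_kronecker [CommSemiring α] (X : Matrix m m α)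
    (Y : Matrix n n α) : Commute (X ⊗ₖ (1 : Matrix n n α)) ((1 : Matrix m m α) ⊗ₖ Y) := by
  simp only [Commute, SemiconjBy, ← mul_kronecker_mul, mul_one, one_mul]

end Matrix

theorem sum_mul_pow_of_orthogonal_idempotents {𝔸 ι : Type*} [Ring 𝔸] [Fintype ι]
    {E X : ι → 𝔸} (hE : ∀ i, IsIdempotentElem (E i)) (horth : ∀ i j, i ≠ j → E i * E j = 0)
    (hsum : ∑ i, E i = 1) (hcomm : ∀ i j, Commute (X i) (E j)) (n : ℕ) :
    (∑ i, E i * X i) ^ n = ∑ i, E i * X i ^ n := by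
  classical
  induction n with
  | zero => simp [hsum]
  | succ n ih =>
    rw [pow_succ, ih, Finset.sum_mul_sum]
    refine Finset.sum_congr rfl fun i _ => ?_
    have hterm : ∀ j, E i * X i ^ n * (E j * X j) = E i * E j * (X i ^ n * X j) := fun j => by
      rw [mul_assoc, ← mul_assoc (X i ^ n), ((hcomm i j).pow_left n).eq]
      noncomm_ring
    rw [Finset.sum_eq_single i (fun j _ hj => by rw [hterm, horth i j (Ne.symm hj), zero_mul])
      (by simp), hterm, hE i, pow_succ]

section BanachAlgebra

variable {𝔸 : Type*} [NormedRing 𝔸] [NormedAlgebra ℚ 𝔸] [CompleteSpace 𝔸]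

theorem NormedSpace.exp_zsmul_of_exp_eq_neg_one {x : 𝔸} (hx : exp x = -1) (n : ℤ) :
    exp (n • x) = (n.negOnePow : 𝔸) := by
  have hx2 : exp x * exp x = 1 := by rw [hx, neg_one_mul, neg_neg]
  have hshift : ∀ k : ℤ, exp ((k + 1) • x) = exp (k • x) * exp x := fun k => by
    rw [add_smul, one_smul, exp_add_of_commute ((Commute.refl x).smul_left k)]
  induction n using Int.induction_on with
  | zero => simp [exp_zero]
  | succ n ih => rw [hshift, ih, hx, Int.negOnePow_succ]; simp
  | pred n ih =>
    calc exp ((-(n : ℤ) - 1) • x) = exp ((-(n : ℤ) - 1) • x) * exp x * exp x := by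
          rw [mul_assoc, hx2, mul_one]
      _ = ((-(n : ℤ) - 1).negOnePow : 𝔸) := by
          rw [← hshift, sub_add_cancel, ih, hx, Int.negOnePow_sub, Int.negOnePow_one]
          simp

theorem NormedSpace.exp_sum_mul_of_orthogonal_idempotents {ι : Type*} [Fintype ι]
    {E X : ι → 𝔸} (hE : ∀ i, IsIdempotentElem (E i)) (horth : ∀ i j, i ≠ j → E i * E j = 0)
    (hsum : ∑ i, E i = 1) (hcomm : ∀ i j, Commute (X i) (E j)) :
    exp (∑ i, E i * X i) = ∑ i, E i * exp (X i) := by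
  have h := hasSum_sum (s := Finset.univ) fun i _ =>
    (exp_series_hasSum_exp' (𝕂 := ℚ) (X i)).mul_left (E i)
  simp only [mul_smul_comm, ← Finset.smul_sum,
    ← sum_mul_pow_of_orthogonal_idempotents hE horth hsum hcomm] at h
  exact (exp_series_hasSum_exp' (𝕂 := ℚ) _).unique h

end BanachAlgebra

theorem exp_kronecker_scalar_of_same_parity_general {m p : Type*}
    [Fintype m] [DecidableEq m] [Fintype p] [DecidableEq p]
    (A : Matrix m m ℂ) (k : ℤ) (hk : Odd k)
    (hexpA : NormedSpace.exp (((Real.pi : ℂ) * Complex.I) • A) = ((-1 : ℂ) ^ k) • 1)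
    (q : ℕ) (B : Matrix p p ℂ)
    (μ : Fin q → ℤ) (F : Fin q → Matrix p p ℂ)
    (hB : B = ∑ s, (μ s : ℂ) • F s)
    (hsum : (∑ s, F s) = 1)
    (hproj : ∀ s, F s * F s = F s)
    (horth : ∀ r s, r ≠ s → F r * F s = 0)
    (hparity : ∀ s t, μ s % 2 = μ t % 2) :
    ∃ γ : ℂ, ‖γ‖ = 1 ∧
      NormedSpace.exp (((Real.pi : ℂ) * Complex.I) • (A ⊗ₖ B)) = γ • 1 := by
  set M := (((Real.pi : ℂ) * Complex.I) • A) ⊗ₖ (1 : Matrix p p ℂ)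
  have hexpM : exp M = -1 := by
    rw [exp_kronecker_one, hexpA, hk.neg_one_zpow, smul_kronecker, one_kronecker_one, neg_one_smul]
  obtain ⟨u, hu⟩ := Int.exists_forall_negOnePow_eq hparity
  refine ⟨((u : ℤ) : ℂ), by rcases Int.units_eq_one_or u with rfl | rfl <;> simp, ?_⟩
  have hE : ∀ s, IsIdempotentElem ((1 : Matrix m m ℂ) ⊗ₖ F s) := fun s => by
    rw [IsIdempotentElem, ← mul_kronecker_mul, one_mul, hproj]
  have hEorth : ∀ r s, r ≠ s → ((1 : Matrix m m ℂ) ⊗ₖ F r) * ((1 : Matrix m m ℂ) ⊗ₖ F s) = 0 :=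
    fun r s hrs => by rw [← mul_kronecker_mul, horth r s hrs, kronecker_zero]
  have hEsum : ∑ s, (1 : Matrix m m ℂ) ⊗ₖ F s = 1 := by
    rw [← kronecker_sum_s16, hsum, one_kronecker_one]
  have hcomm : ∀ r s, Commute ((μ r : ℂ) • M) ((1 : Matrix m m ℂ) ⊗ₖ F s) := fun r s =>
    (commute_kronecker_one_one_kronecker _ (F s)).smul_left (μ r : ℂ)
  have hexp : exp (∑ s, ((1 : Matrix m m ℂ) ⊗ₖ F s) * ((μ s : ℂ) • M))
      = ∑ s, ((1 : Matrix m m ℂ) ⊗ₖ F s) * exp ((μ s : ℂ) • M) :=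
    open scoped Norms.Operator in exp_sum_mul_of_orthogonal_idempotents hE hEorth hEsum hcomm
  have hexpX : ∀ s, exp ((μ s : ℂ) • M) = ((u : ℤ) : Matrix (m × p) (m × p) ℂ) := fun s => by
    rw [Int.cast_smul_eq_zsmul, ← hu s]
    exact open scoped Norms.Operator in exp_zsmul_of_exp_eq_neg_one hexpM (μ s)
  rw [← smul_kronecker, hB, kronecker_sum_smul_eq_sum_one_kronecker_mul, hexp,
    Finset.sum_congr rfl fun s _ => congrArg _ (hexpX s), ← Finset.sum_mul, hEsum, one_mul,
    Int.cast_smul_eq_zsmul, zsmul_one]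

theorem exp_kronecker_scalar_of_same_parity {m p : Type*}
    [Fintype m] [DecidableEq m] [Fintype p] [DecidableEq p]
    (A : Matrix m m ℂ) (hA : A.IsSymm) (k : ℤ) (hk : Odd k)
    (hexpA : NormedSpace.exp (((Real.pi : ℂ) * Complex.I) • A) = ((-1 : ℂ) ^ k) • 1)
    (q : ℕ) (B : Matrix p p ℂ) (hBsymm : B.IsSymm)
    (μ : Fin q → ℤ) (F : Fin q → Matrix p p ℂ)
    (hB : B = ∑ s, (μ s : ℂ) • F s)
    (hsum : (∑ s, F s) = 1)
    (hproj : ∀ s, F s * F s = F s)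
    (horth : ∀ r s, r ≠ s → F r * F s = 0)
    (hparity : ∀ s t, μ s % 2 = μ t % 2) :
    ∃ γ : ℂ, ‖γ‖ = 1 ∧
      NormedSpace.exp (((Real.pi : ℂ) * Complex.I) • (A ⊗ₖ B)) = γ • 1 :=
  exp_kronecker_scalar_of_same_parity_general A k hk hexpA q B μ F hB hsum hproj horth hparity
end
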